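/- Let X, Y be Banach spaces and T : X → Y a bounded operator. Suppose (K_N) is a sequence of compact operators on Y with sup_N ‖I − K_N‖ ≤ γ and such that (I − K_N) converges to 0 pointwise (strongly) on Y. Then (1/γ) limsup_N ‖(I − K_N) T‖ ≤ ‖T‖_e, where ‖T‖_e is the essential norm of T (distance to the compact operators from X to Y). -/
import Mathlib


open Filter Topology

/-- The essential norm of a bounded operator: the distance to the compact operators. -/
noncomputable def essNorm {X Y : Type*} [NormedAddCommGroup X] [NormedSpace ℂ X]
    [NormedAddCommGroup Y] [NormedSpace ℂ Y] (T : X →L[ℂ] Y) : ℝ :=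
  sInf ((fun K : X →L[ℂ] Y => ‖T - K‖) '' {K | IsCompactOperator ⇑K})

/-- Pointwise convergence of a uniformly bounded family of operators is uniform on
compact sets. -/
lemma unif_on_compact {Y : Type*} [NormedAddCommGroup Y] [NormedSpace ℂ Y]
    {γ : ℝ} (hγ : 0 < γ) (A : ℕ → Y →L[ℂ] Y) (hbd : ∀ N, ‖A N‖ ≤ γ)
    (hpt : ∀ y : Y, Tendsto (fun N => A N y) atTop (𝓝 0))
    {M : Set Y} (hM : IsCompact M) {ε : ℝ} (hε : 0 < ε) :
    ∀ᶠ N in atTop, ∀ m ∈ M, ‖A N m‖ ≤ ε := by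
  have hr : 0 < ε / (2 * γ) := by positivity
  obtain ⟨t, -, htf, hcov⟩ := hM.finite_cover_balls hr
  have hev : ∀ᶠ N in atTop, ∀ c ∈ t, ‖A N c‖ ≤ ε / 2 := by
    rw [eventually_all_finite htf]
    intro c _
    have h0 : Tendsto (fun N => ‖A N c‖) atTop (𝓝 0) := by
      simpa using (hpt c).norm
    exact h0.eventually_le_const (half_pos hε)
  filter_upwards [hev] with N hN m hm
  obtain ⟨c, hc, hmc⟩ := Set.mem_iUnion₂.mp (hcov hm)
  have h1 : ‖A N (m - c)‖ ≤ γ * ‖m - c‖ :=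
    ((A N).le_opNorm _).trans (by gcongr; exact hbd N)
  have h2 : ‖m - c‖ ≤ ε / (2 * γ) := by
    rw [Metric.mem_ball, dist_eq_norm] at hmc
    exact hmc.le
  have : A N m = A N (m - c) + A N c := by rw [map_sub]; abel
  rw [this]
  calc ‖A N (m - c) + A N c‖ ≤ ‖A N (m - c)‖ + ‖A N c‖ := norm_add_le _ _
    _ ≤ γ * (ε / (2 * γ)) + ε / 2 := by
        gcongr
        · exact h1.trans (by gcongr)
        · exact hN c hc
    _ = ε := by field_simp; ring

/-- If `(K_N)` is a sequence of compact operators on `Y` with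
`‖I - K_N‖ ≤ γ` for all `N` and `(I - K_N) y → 0` for every `y`, then
`(1/γ) limsup_N ‖(I - K_N) ∘ T‖ ≤ ‖T‖_e`. -/
theorem stmt5 {X Y : Type*} [NormedAddCommGroup X] [NormedSpace ℂ X] [CompleteSpace X]
    [NormedAddCommGroup Y] [NormedSpace ℂ Y] [CompleteSpace Y]
    (γ : ℝ) (hγ : 0 < γ) (T : X →L[ℂ] Y) (K : ℕ → Y →L[ℂ] Y)
    (hcpt : ∀ N, IsCompactOperator ⇑(K N))
    (hbd : ∀ N, ‖ContinuousLinearMap.id ℂ Y - K N‖ ≤ γ)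
    (hpt : ∀ y : Y, Tendsto (fun N => (ContinuousLinearMap.id ℂ Y - K N) y) atTop (𝓝 0)) :
    (1 / γ) * limsup (fun N => ‖(ContinuousLinearMap.id ℂ Y - K N).comp T‖) atTop
      ≤ essNorm T := by
  set A : ℕ → Y →L[ℂ] Y := fun N => ContinuousLinearMap.id ℂ Y - K N with hA
  apply le_csInf
  · exact ⟨‖T - 0‖, 0, isCompactOperator_zero, rfl⟩
  rintro - ⟨C, hC, rfl⟩
  rw [one_div, inv_mul_le_iff₀ hγ]
  -- reduce to: limsup ≤ γ * ‖T - C‖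
  have hcob : IsCoboundedUnder (· ≤ ·) atTop fun N => ‖(A N).comp T‖ :=
    isCoboundedUnder_le_of_eventually_le atTop (Eventually.of_forall fun N => norm_nonneg _)
  refine le_of_forall_pos_le_add fun ε hε => ?_
  refine limsup_le_of_le hcob ?_
  -- key: eventually ‖(A N).comp C‖ ≤ ε
  obtain ⟨M, hMc, hMn⟩ := hC
  obtain ⟨r, hr, hball⟩ := Metric.mem_nhds_iff.mp hMn
  have hε₀ : 0 < ε * (r / 2) := by positivity
  have hev := unif_on_compact hγ A hbd hpt hMc hε₀
  have hcomp : ∀ᶠ N in atTop, ‖(A N).comp C‖ ≤ ε := by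
    filter_upwards [hev] with N hN
    refine ContinuousLinearMap.opNorm_le_bound _ hε.le fun x => ?_
    rcases eq_or_ne x 0 with rfl | hx
    · simp
    · have hxn : 0 < ‖x‖ := norm_pos_iff.mpr hx
      set c : ℝ := (r / 2) / ‖x‖ with hc
      have hcpos : 0 < c := by positivity
      have hyb : (c : ℂ) • x ∈ Metric.ball (0 : X) r := by
        rw [Metric.mem_ball, dist_zero_right, norm_smul]
        simp only [Complex.norm_real, Real.norm_eq_abs, abs_of_pos hcpos]
        rw [hc, div_mul_cancel₀ _ hxn.ne']
        linarith
      have hCM : C ((c : ℂ) • x) ∈ M := hball hyb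
      have key : ‖A N (C ((c : ℂ) • x))‖ ≤ ε * (r / 2) := hN _ hCM
      rw [map_smul, map_smul, norm_smul, Complex.norm_real, Real.norm_eq_abs,
        abs_of_pos hcpos] at key
      have : ‖A N (C x)‖ ≤ (ε * (r / 2)) / c := by
        rw [le_div_iff₀ hcpos, mul_comm]
        exact key
      calc ‖((A N).comp C) x‖ = ‖A N (C x)‖ := rfl
        _ ≤ (ε * (r / 2)) / c := this
        _ = ε * ‖x‖ := by rw [hc]; field_simp
  filter_upwards [hcomp] with N hN
  have hsplit : (A N).comp T = (A N).comp (T - C) + (A N).comp C := by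
    rw [ContinuousLinearMap.comp_sub]; abel
  calc ‖(A N).comp T‖ ≤ ‖(A N).comp (T - C)‖ + ‖(A N).comp C‖ := by
        rw [hsplit]; exact norm_add_le _ _
    _ ≤ γ * ‖T - C‖ + ε := by
        gcongr
        exact ((A N).opNorm_comp_le _).trans (by gcongr; exact hbd N)
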